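/- arXiv:2005.01141 — 5 statements merged into one kernel-verified Lean document; each statement's English description precedes it below -/
import Mathlib

section
/- Let a > 0 and define u : ℝ² → ℝ by u(x) = −2·ln(1 + a·‖x‖²). Then for every R > 0, (1/2)·∫_{B_R(0)} ‖∇u(x)‖² dx = 8π·( ln(1 + aR²) + 1/(1 + aR²) − 1 ), where B_R(0) is the open Euclidean ball of radius R centered at the origin. -/
/-!
The bubble is radial, `u x = f (‖x‖ ^ 2)` with `f t = -2 log (1 + a t)`, so
`∇u x = 2 f' (‖x‖ ^ 2) • x` and `‖∇u x‖ ^ 2 = (4 a r / (1 + a r ^ 2)) ^ 2` with `r = ‖x‖`.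
Polar coordinates turn the integral over the ball into `2π ∫₀ᴿ r (4 a r / (1 + a r ^ 2)) ^ 2 dr`,
and this integrand is the derivative of `8 (log (1 + a r ^ 2) + (1 + a r ^ 2)⁻¹)`.
-/

open Real MeasureTheory Metric Set

theorem hasGradientAt_comp_norm_sq {E : Type*} [NormedAddCommGroup E] [InnerProductSpace ℝ E]
    [CompleteSpace E] {f : ℝ → ℝ} {f' : ℝ} {x : E} (hf : HasDerivAt f f' (‖x‖ ^ 2)) :
    HasGradientAt (fun y => f (‖y‖ ^ 2)) ((2 * f') • x) x := by
  rw [hasGradientAt_iff_hasFDerivAt]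
  refine (hf.comp_hasFDerivAt x (hasStrictFDerivAt_norm_sq x).hasFDerivAt).congr_fderiv ?_
  ext y
  simp only [smul_apply, coe_innerSL_apply, nsmul_eq_mul, Nat.cast_ofNat, smul_eq_mul, map_smul,
    InnerProductSpace.toDual_apply_apply]
  ring

theorem hasGradientAt_neg_two_mul_log_one_add_mul_norm_sq {E : Type*} [NormedAddCommGroup E]
    [InnerProductSpace ℝ E] [CompleteSpace E] {a : ℝ} (ha : 0 ≤ a) (x : E) :
    HasGradientAt (fun y => -2 * log (1 + a * ‖y‖ ^ 2)) ((-4 * a / (1 + a * ‖x‖ ^ 2)) • x) x := by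
  have hpos : 0 < 1 + a * ‖x‖ ^ 2 := by positivity
  have hf : HasDerivAt (fun t => -2 * log (1 + a * t))
      (-2 * (a / (1 + a * ‖x‖ ^ 2))) (‖x‖ ^ 2) := by
    simpa using ((((hasDerivAt_id _).const_mul a).const_add 1).log hpos.ne').const_mul (-2)
  convert hasGradientAt_comp_norm_sq hf using 2
  ring

theorem setIntegral_ball_fun_norm_addHaar {E F : Type*} [NormedAddCommGroup E] [NormedSpace ℝ E]
    [FiniteDimensional ℝ E] [Nontrivial E] [MeasurableSpace E] [BorelSpace E] [NormedAddCommGroup F]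
    [NormedSpace ℝ F] (μ : Measure E) [μ.IsAddHaarMeasure] (f : ℝ → F) (R : ℝ) :
    ∫ x in ball 0 R, f ‖x‖ ∂μ = Module.finrank ℝ E • μ.real (ball 0 1) •
      ∫ r in Ioo 0 R, r ^ (Module.finrank ℝ E - 1) • f r := by
  have hball : ∀ x : E, (ball 0 R).indicator (fun x => f ‖x‖) x = (Iio R).indicator f ‖x‖ :=
    fun x => by simp only [indicator, mem_ball_zero_iff, mem_Iio]
  rw [← integral_indicator measurableSet_ball, funext hball, integral_fun_norm_addHaar,
    ← Ioi_inter_Iio, ← setIntegral_indicator measurableSet_Iio]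
  congr 3 with r
  by_cases hr : r < R <;> simp [hr]

theorem hasDerivAt_log_one_add_mul_sq_add_inv {a : ℝ} (ha : 0 ≤ a) (r : ℝ) :
    HasDerivAt (fun r => log (1 + a * r ^ 2) + (1 + a * r ^ 2)⁻¹)
      (2 * a ^ 2 * r ^ 3 / (1 + a * r ^ 2) ^ 2) r := by
  have hpos : 0 < 1 + a * r ^ 2 := by positivity
  have hq : HasDerivAt (fun r => 1 + a * r ^ 2) (a * (2 * r)) r := by
    simpa using ((hasDerivAt_pow 2 r).const_mul a).const_add 1
  refine ((hq.log hpos.ne').add (hq.inv hpos.ne')).congr_deriv ?_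
  field_simp
  ring

theorem integral_Ioo_mul_sq_four_mul_div_one_add_mul_sq {a : ℝ} (ha : 0 ≤ a) {R : ℝ} (hR : 0 ≤ R) :
    ∫ r in Ioo 0 R, r * (4 * a * r / (1 + a * r ^ 2)) ^ 2
      = 8 * (log (1 + a * R ^ 2) + (1 + a * R ^ 2)⁻¹ - 1) := by
  have hpos : ∀ r : ℝ, 1 + a * r ^ 2 ≠ 0 := fun r => by positivity
  have hderiv : ∀ r, HasDerivAt (fun r => 8 * (log (1 + a * r ^ 2) + (1 + a * r ^ 2)⁻¹))
      (r * (4 * a * r / (1 + a * r ^ 2)) ^ 2) r := fun r => by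
    refine ((hasDerivAt_log_one_add_mul_sq_add_inv ha r).const_mul 8).congr_deriv ?_
    field_simp
    ring
  have hcont : Continuous fun r : ℝ => r * (4 * a * r / (1 + a * r ^ 2)) ^ 2 := by
    fun_prop (disch := exact hpos _)
  rw [← integral_Ioc_eq_integral_Ioo, ← intervalIntegral.integral_of_le hR,
    intervalIntegral.integral_eq_sub_of_hasDerivAt (fun r _ => hderiv r)
      (hcont.intervalIntegrable 0 R)]
  simp only [zero_pow two_ne_zero, mul_zero, add_zero, log_one, inv_one]
  ring

theorem stmt_3 (a : ℝ) (ha : 0 < a)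
    (u : EuclideanSpace ℝ (Fin 2) → ℝ)
    (hu : ∀ x, u x = -2 * Real.log (1 + a * ‖x‖ ^ 2)) :
    ∀ R : ℝ, 0 < R →
      (1 / 2) * (∫ x in Metric.ball (0 : EuclideanSpace ℝ (Fin 2)) R, ‖gradient u x‖ ^ 2)
        = 8 * π * (Real.log (1 + a * R ^ 2) + 1 / (1 + a * R ^ 2) - 1) := by
  intro R hR
  have hdensity : ∀ x, ‖gradient u x‖ ^ 2 = (4 * a * ‖x‖ / (1 + a * ‖x‖ ^ 2)) ^ 2 := fun x => by
    rw [funext hu, (hasGradientAt_neg_two_mul_log_one_add_mul_norm_sq ha.le x).gradient,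
      norm_smul, mul_pow, norm_eq_abs, sq_abs]
    ring
  have hradial := setIntegral_ball_fun_norm_addHaar (volume : Measure (EuclideanSpace ℝ (Fin 2)))
    (fun r => (4 * a * r / (1 + a * r ^ 2)) ^ 2) R
  simp only [finrank_euclideanSpace_fin, measureReal_def, EuclideanSpace.volume_ball_fin_two,
    ENNReal.ofReal_one, one_pow, one_mul, ENNReal.toReal_ofReal pi_nonneg, Nat.add_one_sub_one,
    pow_one, smul_eq_mul, nsmul_eq_mul, Nat.cast_ofNat] at hradial
  simp_rw [hdensity, hradial, integral_Ioo_mul_sq_four_mul_div_one_add_mul_sq ha.le hR.le, one_div]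
  ring
end

section
/- Let 0 < r < s and A, B ∈ ℝ. Let f : ℝ² → ℝ be continuously differentiable on an open set containing the closed annulus {x : r ≤ ‖x‖ ≤ s}, and suppose f(x) = A whenever ‖x‖ = r and f(x) = B whenever ‖x‖ = s. Then ∫_{{r < ‖x‖ < s}} ‖∇f(x)‖² dx ≥ 2π·(B − A)²/ln(s/r). (Consequently, half the Dirichlet energy of f on the annulus is at least π(B−A)²/ln(s/r), the energy of the harmonic interpolant.) -/
/-!
Along every ray `ρ ↦ ρ • v` with `‖v‖ = 1`, `f` runs from `A` to `B` as `ρ` runs from `r` to `s`.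
Comparing its radial derivative `h'` with that of the harmonic interpolant `c log ρ`, i.e.
completing the square in `ρ (h' - c / ρ)² ≥ 0`, gives `∫ ρ h'² dρ ≥ (B - A)² / log (s / r)`.
The radial derivative is bounded by `‖∇f‖`, and integrating over the angle in polar coordinates
contributes the factor `2π`.
-/

open Real MeasureTheory Set

theorem sq_sub_div_log_le_integral_mul_sq {r s : ℝ} (hr : 0 < r) (hrs : r < s) {h h' : ℝ → ℝ}
    (hd : ∀ ρ ∈ Icc r s, HasDerivAt h (h' ρ) ρ) (hc : ContinuousOn h' (Icc r s)) :
    (h s - h r) ^ 2 / log (s / r) ≤ ∫ ρ in Ioo r s, ρ * h' ρ ^ 2 := by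
  have huIcc : uIcc r s = Icc r s := uIcc_of_le hrs.le
  have hpos : ∀ ρ ∈ Icc r s, 0 < ρ := fun ρ hρ => hr.trans_le hρ.1
  have hinv : ContinuousOn (fun ρ : ℝ => 1 / ρ) (Icc r s) :=
    continuousOn_const.div continuousOn_id fun ρ hρ => (hpos ρ hρ).ne'
  set c := (h s - h r) / log (s / r) with hc_def
  have hsq : ∀ ρ ∈ Icc r s, 2 * c * h' ρ - c ^ 2 * (1 / ρ) ≤ ρ * h' ρ ^ 2 := by
    intro ρ hρ
    have hρ := hpos ρ hρ
    have hsquare : ρ * (h' ρ - c / ρ) ^ 2 = ρ * h' ρ ^ 2 - (2 * c * h' ρ - c ^ 2 * (1 / ρ)) := by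
      field_simp
      ring
    linarith [hsquare ▸ mul_nonneg hρ.le (sq_nonneg (h' ρ - c / ρ))]
  have hint : IntervalIntegrable h' volume r s := (huIcc ▸ hc).intervalIntegrable
  have hFTC : ∫ ρ in r..s, h' ρ = h s - h r :=
    intervalIntegral.integral_eq_sub_of_hasDerivAt (fun ρ hρ => hd ρ (huIcc ▸ hρ)) hint
  have hlog : ∫ ρ in r..s, 1 / ρ = log (s / r) :=
    integral_one_div fun h0 => (hpos 0 (huIcc ▸ h0)).false
  calc (h s - h r) ^ 2 / log (s / r)
      = ∫ ρ in r..s, (2 * c * h' ρ - c ^ 2 * (1 / ρ)) := by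
        rw [intervalIntegral.integral_sub (hint.const_mul _)
          ((huIcc ▸ hinv).intervalIntegrable.const_mul _), intervalIntegral.integral_const_mul,
          intervalIntegral.integral_const_mul, hFTC, hlog, hc_def]
        field_simp
        ring
    _ ≤ ∫ ρ in r..s, ρ * h' ρ ^ 2 :=
        intervalIntegral.integral_mono_on hrs.le
          (((hc.const_smul (2 * c)).sub (hinv.const_smul (c ^ 2))).intervalIntegrable_of_Icc hrs.le)
          ((continuousOn_id.mul (hc.pow 2)).intervalIntegrable_of_Icc hrs.le) hsq
    _ = ∫ ρ in Ioo r s, ρ * h' ρ ^ 2 := by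
        rw [intervalIntegral.integral_of_le hrs.le, integral_Ioc_eq_integral_Ioo]

theorem norm_gradient_eq_norm_fderiv {E : Type*} [NormedAddCommGroup E] [InnerProductSpace ℝ E]
    [CompleteSpace E] (f : E → ℝ) (x : E) : ‖gradient f x‖ = ‖fderiv ℝ f x‖ :=
  (InnerProductSpace.toDual ℝ E).symm.norm_map _

section Ray

variable {E : Type*} [NormedAddCommGroup E] [InnerProductSpace ℝ E] [CompleteSpace E]
  {f : E → ℝ} {U : Set E}

theorem ContDiffOn.continuousOn_norm_gradient (hf : ContDiffOn ℝ 1 f U) (hU : IsOpen U) :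
    ContinuousOn (fun x => ‖gradient f x‖) U := by
  simpa only [norm_gradient_eq_norm_fderiv] using
    (hf.continuousOn_fderiv_of_isOpen hU le_rfl).norm

theorem sq_sub_div_log_le_integral_mul_norm_gradient_sq (hU : IsOpen U) (hf : ContDiffOn ℝ 1 f U)
    {r s : ℝ} (hr : 0 < r) (hrs : r < s) {v : E} (hv : ‖v‖ = 1)
    (hmem : ∀ ρ ∈ Icc r s, ρ • v ∈ U) :
    (f (s • v) - f (r • v)) ^ 2 / log (s / r) ≤
      ∫ ρ in Ioo r s, ρ * ‖gradient f (ρ • v)‖ ^ 2 := by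
  have hray : ContinuousOn (fun ρ : ℝ => ρ • v) (Icc r s) := by fun_prop
  have hfderiv : ContinuousOn (fun ρ => fderiv ℝ f (ρ • v)) (Icc r s) :=
    (hf.continuousOn_fderiv_of_isOpen hU le_rfl).comp hray hmem
  have hd : ∀ ρ ∈ Icc r s, HasDerivAt (fun ρ : ℝ => f (ρ • v)) (fderiv ℝ f (ρ • v) v) ρ :=
    fun ρ hρ => ((hf.differentiableOn one_ne_zero).differentiableAt
      (hU.mem_nhds (hmem ρ hρ))).hasFDerivAt.comp_hasDerivAt ρ
      (by simpa using (hasDerivAt_id ρ).smul_const v)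
  have hradial := hfderiv.clm_apply (continuousOn_const (c := v))
  refine (sq_sub_div_log_le_integral_mul_sq hr hrs hd hradial).trans
    (setIntegral_mono_on ?_ ?_ measurableSet_Ioo fun ρ hρ => ?_)
  · exact ((continuousOn_id.mul (hradial.pow 2)).integrableOn_compact isCompact_Icc).mono_set
      Ioo_subset_Icc_self
  · exact ((continuousOn_id.mul (((hf.continuousOn_norm_gradient hU).comp hray hmem).pow 2)
      ).integrableOn_compact isCompact_Icc).mono_set Ioo_subset_Icc_self
  · have hdir : |fderiv ℝ f (ρ • v) v| ≤ ‖gradient f (ρ • v)‖ := by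
      simpa [norm_gradient_eq_norm_fderiv, hv] using (fderiv ℝ f (ρ • v)).le_opNorm v
    exact mul_le_mul_of_nonneg_left (sq_le_sq.2 (by simpa using hdir)) (hr.trans hρ.1).le

end Ray

noncomputable def polarUnit (θ : ℝ) : EuclideanSpace ℝ (Fin 2) := !₂[cos θ, sin θ]

theorem norm_polarUnit (θ : ℝ) : ‖polarUnit θ‖ = 1 := by
  simp [polarUnit, EuclideanSpace.norm_eq, Fin.sum_univ_two]

theorem continuous_polarUnit : Continuous polarUnit := by
  unfold polarUnit
  fun_prop

theorem integral_comp_smul_polarUnit {F : Type*} [NormedAddCommGroup F] [NormedSpace ℝ F]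
    (g : EuclideanSpace ℝ (Fin 2) → F) :
    ∫ p in polarCoord.target, p.1 • g (p.1 • polarUnit p.2) = ∫ x, g x := by
  have hφ := Complex.orthonormalBasisOneI.measurePreserving_repr
  rw [← hφ.integral_comp Complex.orthonormalBasisOneI.repr.toHomeomorph.measurableEmbedding,
    ← Complex.integral_comp_polarCoord_symm]
  congr! 4 with p
  ext i
  fin_cases i <;> simp [polarUnit, Complex.cos_ofReal_re, Complex.sin_ofReal_re]

theorem setIntegral_annulus_eq_setIntegral_polar {F : Type*} [NormedAddCommGroup F]
    [NormedSpace ℝ F] (g : EuclideanSpace ℝ (Fin 2) → F) {r s : ℝ} (hr : 0 ≤ r) :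
    ∫ x in {x | r < ‖x‖ ∧ ‖x‖ < s}, g x =
      ∫ p in Ioo r s ×ˢ Ioo (-π) π, p.1 • g (p.1 • polarUnit p.2) := by
  have hannulus : MeasurableSet {x : EuclideanSpace ℝ (Fin 2) | r < ‖x‖ ∧ ‖x‖ < s} :=
    (measurableSet_lt measurable_const measurable_norm).inter
      (measurableSet_lt measurable_norm measurable_const)
  have hsub : Ioo r s ×ˢ Ioo (-π) π ⊆ polarCoord.target := by
    rw [polarCoord_target]
    exact prod_mono (fun ρ hρ => hr.trans_lt hρ.1) subset_rfl
  rw [← integral_indicator hannulus, ← integral_comp_smul_polarUnit,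
    ← inter_eq_self_of_subset_right hsub, ← setIntegral_indicator
      (measurableSet_Ioo.prod measurableSet_Ioo)]
  refine setIntegral_congr_fun polarCoord.open_target.measurableSet fun p hp => ?_
  rw [polarCoord_target] at hp
  have hnorm : ‖p.1 • polarUnit p.2‖ = p.1 := by
    rw [norm_smul, norm_polarUnit, mul_one, Real.norm_of_nonneg hp.1.le]
  by_cases hT : p ∈ Ioo r s ×ˢ Ioo (-π) π
  · rw [indicator_of_mem hT, indicator_of_mem (by simpa [hnorm] using hT.1)]
  · rw [indicator_of_notMem hT, indicator_of_notMem (by simpa [hnorm, hp.2] using hT),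
      smul_zero]

theorem measureReal_univ_mul_le_integral_prod {α β : Type*} [MeasurableSpace α]
    [MeasurableSpace β] {μ : Measure α} {ν : Measure β} [SFinite μ] [SFinite ν]
    [IsFiniteMeasure ν] {H : α × β → ℝ} (hH : Integrable H (μ.prod ν)) {c : ℝ}
    (hc : ∀ y, c ≤ ∫ x, H (x, y) ∂μ) :
    ν.real univ * c ≤ ∫ p, H p ∂μ.prod ν := by
  rw [integral_prod_symm H hH, ← smul_eq_mul, ← integral_const]
  exact integral_mono (integrable_const c) hH.integral_prod_right hc

theorem stmt_6 (r s A B : ℝ) (hr : 0 < r) (hrs : r < s)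
    (f : EuclideanSpace ℝ (Fin 2) → ℝ)
    (U : Set (EuclideanSpace ℝ (Fin 2))) (hU : IsOpen U)
    (hsub : {x : EuclideanSpace ℝ (Fin 2) | r ≤ ‖x‖ ∧ ‖x‖ ≤ s} ⊆ U)
    (hf : ContDiffOn ℝ 1 f U)
    (hA : ∀ x : EuclideanSpace ℝ (Fin 2), ‖x‖ = r → f x = A)
    (hB : ∀ x : EuclideanSpace ℝ (Fin 2), ‖x‖ = s → f x = B) :
    (∫ x in {x : EuclideanSpace ℝ (Fin 2) | r < ‖x‖ ∧ ‖x‖ < s}, ‖gradient f x‖ ^ 2)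
      ≥ 2 * π * (B - A) ^ 2 / Real.log (s / r) := by
  set H : ℝ × ℝ → ℝ := fun p => p.1 * ‖gradient f (p.1 • polarUnit p.2)‖ ^ 2
  have hnorm : ∀ ρ θ, 0 ≤ ρ → ‖ρ • polarUnit θ‖ = ρ := fun ρ θ hρ => by
    rw [norm_smul, norm_polarUnit, mul_one, Real.norm_of_nonneg hρ]
  have hmem : ∀ θ, ∀ ρ ∈ Icc r s, ρ • polarUnit θ ∈ U := fun θ ρ hρ =>
    hsub (by simpa only [mem_ofPred_eq, hnorm ρ θ (hr.le.trans hρ.1)] using mem_Icc.1 hρ)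
  have hray : ∀ θ, (B - A) ^ 2 / log (s / r) ≤ ∫ ρ in Ioo r s, H (ρ, θ) := fun θ => by
    simpa only [hA _ (hnorm r θ hr.le), hB _ (hnorm s θ (hr.trans hrs).le)] using
      sq_sub_div_log_le_integral_mul_norm_gradient_sq hU hf hr hrs (norm_polarUnit θ) (hmem θ)
  have hH : Integrable H ((volume.restrict (Ioo r s)).prod (volume.restrict (Ioo (-π) π))) := by
    rw [Measure.prod_restrict, ← Measure.volume_eq_prod]
    refine (ContinuousOn.integrableOn_compact (isCompact_Icc.prod isCompact_Icc) ?_).mono_set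
      (prod_mono Ioo_subset_Icc_self Ioo_subset_Icc_self)
    exact continuousOn_fst.mul (((hf.continuousOn_norm_gradient hU).comp
      (continuousOn_fst.smul (continuous_polarUnit.comp_continuousOn continuousOn_snd))
      fun p hp => hmem p.2 p.1 hp.1).pow 2)
  rw [ge_iff_le, setIntegral_annulus_eq_setIntegral_polar _ hr.le, Measure.volume_eq_prod,
    ← Measure.prod_restrict]
  calc 2 * π * (B - A) ^ 2 / log (s / r)
      = (volume.restrict (Ioo (-π) π)).real univ * ((B - A) ^ 2 / log (s / r)) := by
        rw [measureReal_restrict_apply_univ, Real.volume_real_Ioo_of_le (by linarith [pi_pos])]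
        ring
    _ ≤ _ := measureReal_univ_mul_le_integral_prod hH hray
end

section
/- Let 0 < r < s and let f : ℝ² → ℝ be continuously differentiable on an open set containing the closed annulus {x : r ≤ ‖x‖ ≤ s}. Define the circular average f* : [r, s] → ℝ by f*(ρ) = (1/(2π))·∫₀^{2π} f(ρ·cos θ, ρ·sin θ) dθ. Then f* is differentiable on (r, s) and 2π·∫_r^s |(f*)'(ρ)|²·ρ dρ ≤ ∫_{{r < ‖x‖ < s}} ‖∇f(x)‖² dx. In other words, replacing f by its circular averages does not increase the Dirichlet energy on the annulus. -/
/-!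
Differentiating under the integral sign, the derivative of the circular mean `f*` at `ρ` is the
mean over the circle of radius `ρ` of the radial derivative `∂f/∂r = Df · (cos θ, sin θ)`. By
Cauchy–Schwarz (Jensen for `x ↦ x²`) its square is at most the mean of `(∂f/∂r)² ≤ ‖∇f‖²`;
multiplying by `2πρ` and integrating in `ρ` gives, in polar coordinates, the Dirichlet energy of
`f` on the annulus.
-/

open Real MeasureTheory Set Filter Topology

theorem sq_intervalIntegral_le {a b : ℝ} (hab : a ≤ b) {g : ℝ → ℝ}
    (hg : IntervalIntegrable g volume a b)
    (hg2 : IntervalIntegrable (fun x => g x ^ 2) volume a b) :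
    (∫ x in a..b, g x) ^ 2 ≤ (b - a) * ∫ x in a..b, g x ^ 2 := by
  rcases hab.eq_or_lt with rfl | hlt
  · simp
  have hμ : volume (Ioc a b) = ENNReal.ofReal (b - a) := Real.volume_Ioc
  have jensen := (even_two.convexOn_pow (𝕜 := ℝ)).map_set_average_le
    (continuous_pow 2).continuousOn isClosed_univ (by simp [hμ, hlt]) (by simp [hμ]) (by simp)
    hg.1 hg2.1
  simp only [setAverage_eq, measureReal_def, hμ, smul_eq_mul,
    ← intervalIntegral.integral_of_le hab, ENNReal.toReal_ofReal (sub_nonneg.2 hab)] at jensen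
  have hpos : 0 < b - a := sub_pos.2 hlt
  calc (∫ x in a..b, g x) ^ 2 = (b - a) ^ 2 * ((b - a)⁻¹ * ∫ x in a..b, g x) ^ 2 := by
        field_simp
    _ ≤ (b - a) ^ 2 * ((b - a)⁻¹ * ∫ x in a..b, g x ^ 2) := by gcongr
    _ = (b - a) * ∫ x in a..b, g x ^ 2 := by field_simp

variable {E F : Type*} [NormedAddCommGroup E] [NormedSpace ℝ E]
  [NormedAddCommGroup F] [NormedSpace ℝ F]

theorem sq_intervalIntegral_apply_le {a b : ℝ} (hab : a ≤ b) {L : ℝ → E →L[ℝ] ℝ} {v : ℝ → E}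
    (hL : Continuous L) (hv : Continuous v) (hv1 : ∀ θ, ‖v θ‖ ≤ 1) :
    (∫ θ in a..b, L θ (v θ)) ^ 2 ≤ (b - a) * ∫ θ in a..b, ‖L θ‖ ^ 2 := by
  have hLv : Continuous fun θ => L θ (v θ) := hL.clm_apply hv
  refine (sq_intervalIntegral_le hab (hLv.intervalIntegrable _ _)
    ((hLv.pow 2).intervalIntegrable _ _)).trans ?_
  gcongr
  refine intervalIntegral.integral_mono_on hab ((hLv.pow 2).intervalIntegrable _ _)
    ((hL.norm.pow 2).intervalIntegrable _ _) fun θ _ => ?_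
  rw [← sq_abs, ← Real.norm_eq_abs]
  gcongr
  exact ((L θ).le_opNorm _).trans (mul_le_of_le_one_right (norm_nonneg _) (hv1 θ))

theorem hasDerivAt_intervalIntegral_comp_smul {f : E → F} {U : Set E} (hU : IsOpen U)
    (hf : ContDiffOn ℝ 1 f U) {v : ℝ → E} (hv : Continuous v) {a b ρ₁ ρ₂ ρ₀ : ℝ}
    (hsub : ∀ ρ ∈ Icc ρ₁ ρ₂, ∀ θ ∈ uIcc a b, ρ • v θ ∈ U) (hρ₀ : ρ₀ ∈ Ioo ρ₁ ρ₂) :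
    HasDerivAt (fun ρ => ∫ θ in a..b, f (ρ • v θ))
      (∫ θ in a..b, fderiv ℝ f (ρ₀ • v θ) (v θ)) ρ₀ := by
  have hK : IsCompact ((fun p : ℝ × ℝ => p.1 • v p.2) '' Icc ρ₁ ρ₂ ×ˢ uIcc a b) :=
    (isCompact_Icc.prod isCompact_uIcc).image (by fun_prop)
  have hKU : (fun p : ℝ × ℝ => p.1 • v p.2) '' Icc ρ₁ ρ₂ ×ˢ uIcc a b ⊆ U := by
    rintro _ ⟨p, hp, rfl⟩
    exact hsub p.1 hp.1 p.2 hp.2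
  have hf' : ContinuousOn (fderiv ℝ f) U := hf.continuousOn_fderiv_of_isOpen hU le_rfl
  obtain ⟨C, hC⟩ := hK.exists_bound_of_continuousOn (hf'.mono hKU)
  have hcont : ∀ ρ ∈ Icc ρ₁ ρ₂, ContinuousOn (fun θ => f (ρ • v θ)) (uIcc a b) := fun ρ hρ =>
    hf.continuousOn.comp (by fun_prop) fun θ hθ => hsub ρ hρ θ hθ
  have hcont_fderiv : ContinuousOn (fun θ => fderiv ℝ f (ρ₀ • v θ) (v θ)) (uIcc a b) :=
    (hf'.comp (by fun_prop) fun θ hθ => hsub ρ₀ (Ioo_subset_Icc_self hρ₀) θ hθ).clm_apply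
      hv.continuousOn
  refine (intervalIntegral.hasDerivAt_integral_of_dominated_loc_of_deriv_le
    (F := fun ρ θ => f (ρ • v θ))
    (F' := fun ρ θ => fderiv ℝ f (ρ • v θ) (v θ)) (bound := fun θ => C * ‖v θ‖)
    (Ioo_mem_nhds hρ₀.1 hρ₀.2) ?_ ?_ ?_ ?_ ?_ ?_).2
  · filter_upwards [Ioo_mem_nhds hρ₀.1 hρ₀.2] with ρ hρ
    exact ((hcont ρ (Ioo_subset_Icc_self hρ)).mono uIoc_subset_uIcc).aestronglyMeasurable
      measurableSet_uIoc
  · exact (hcont ρ₀ (Ioo_subset_Icc_self hρ₀)).intervalIntegrable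
  · exact (hcont_fderiv.mono uIoc_subset_uIcc).aestronglyMeasurable measurableSet_uIoc
  · refine ae_of_all _ fun θ hθ ρ hρ => ?_
    exact ((fderiv ℝ f _).le_opNorm _).trans <| mul_le_mul_of_nonneg_right
      (hC _ ⟨(ρ, θ), ⟨Ioo_subset_Icc_self hρ, uIoc_subset_uIcc hθ⟩, rfl⟩) (norm_nonneg _)
  · exact (continuous_const.mul hv.norm).intervalIntegrable _ _
  · refine ae_of_all _ fun θ hθ ρ hρ => ?_
    have hdiff := (hf.differentiableOn one_ne_zero).differentiableAt
      (hU.mem_nhds (hsub ρ (Ioo_subset_Icc_self hρ) θ (uIoc_subset_uIcc hθ)))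
    simpa [Function.comp_def] using
      hdiff.hasFDerivAt.comp_hasDerivAt ρ ((hasDerivAt_id ρ).smul_const (v θ))

-- Spelled as in `hfstar`, which then unfolds to `circleMean f` by `rfl`.
noncomputable def polarPt (ρ θ : ℝ) : EuclideanSpace ℝ (Fin 2) :=
  (WithLp.equiv 2 (Fin 2 → ℝ)).symm ![ρ * cos θ, ρ * sin θ]

theorem polarPt_eq_smul (ρ θ : ℝ) : polarPt ρ θ = ρ • polarPt 1 θ := by
  ext i
  fin_cases i <;> simp [polarPt]

@[simp]
theorem norm_polarPt_one (θ : ℝ) : ‖polarPt 1 θ‖ = 1 := by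
  simp [polarPt, EuclideanSpace.norm_eq, Fin.sum_univ_two]

theorem norm_polarPt (ρ θ : ℝ) : ‖polarPt ρ θ‖ = |ρ| := by
  rw [polarPt_eq_smul, norm_smul, norm_polarPt_one, mul_one, Real.norm_eq_abs]

@[fun_prop]
theorem Continuous.polarPt {α : Type*} [TopologicalSpace α] {f g : α → ℝ} (hf : Continuous f)
    (hg : Continuous g) : Continuous fun x => polarPt (f x) (g x) :=
  (PiLp.continuous_toLp 2 _).comp <| continuous_pi fun i => by fin_cases i <;> simp <;> fun_prop

theorem polarPt_add_two_pi (ρ θ : ℝ) : polarPt ρ (θ + 2 * π) = polarPt ρ θ := by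
  simp [polarPt]

noncomputable def circleMean (f : EuclideanSpace ℝ (Fin 2) → F) (ρ : ℝ) : F :=
  (2 * π)⁻¹ • ∫ θ in 0..2 * π, f (polarPt ρ θ)

theorem hasDerivAt_circleMean {f : EuclideanSpace ℝ (Fin 2) → F}
    {U : Set (EuclideanSpace ℝ (Fin 2))} (hU : IsOpen U) (hf : ContDiffOn ℝ 1 f U)
    {ρ₁ ρ₂ ρ₀ : ℝ} (hsub : ∀ ρ ∈ Icc ρ₁ ρ₂, ∀ θ, polarPt ρ θ ∈ U) (hρ₀ : ρ₀ ∈ Ioo ρ₁ ρ₂) :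
    HasDerivAt (circleMean f)
      ((2 * π)⁻¹ • ∫ θ in 0..2 * π, fderiv ℝ f (polarPt ρ₀ θ) (polarPt 1 θ)) ρ₀ := by
  have h := hasDerivAt_intervalIntegral_comp_smul hU hf (v := polarPt 1) (a := 0) (b := 2 * π)
    (by fun_prop) (fun ρ hρ θ _ => polarPt_eq_smul ρ θ ▸ hsub ρ hρ θ) hρ₀
  simp only [← polarPt_eq_smul] at h
  exact h.const_smul _

theorem two_pi_mul_sq_mean_apply_polarPt_le {L : ℝ → EuclideanSpace ℝ (Fin 2) →L[ℝ] ℝ}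
    (hL : Continuous L) :
    2 * π * ((2 * π)⁻¹ * ∫ θ in 0..2 * π, L θ (polarPt 1 θ)) ^ 2
      ≤ ∫ θ in 0..2 * π, ‖L θ‖ ^ 2 := by
  have hcs := sq_intervalIntegral_apply_le two_pi_pos.le hL (by fun_prop)
    fun θ => (norm_polarPt_one θ).le
  rw [sub_zero] at hcs
  calc 2 * π * ((2 * π)⁻¹ * ∫ θ in 0..2 * π, L θ (polarPt 1 θ)) ^ 2
      = (2 * π)⁻¹ * (∫ θ in 0..2 * π, L θ (polarPt 1 θ)) ^ 2 := by field_simp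
    _ ≤ ∫ θ in 0..2 * π, ‖L θ‖ ^ 2 := by rwa [inv_mul_le_iff₀ two_pi_pos]

theorem setIntegral_annulus_eq_polar {r s : ℝ} (hr : 0 ≤ r)
    (g : EuclideanSpace ℝ (Fin 2) → F) :
    ∫ x in {x : EuclideanSpace ℝ (Fin 2) | r < ‖x‖ ∧ ‖x‖ < s}, g x
      = ∫ p in Ioo r s ×ˢ Ioo (-π) π, p.1 • g (polarPt p.1 p.2) := by
  set A := {x : EuclideanSpace ℝ (Fin 2) | r < ‖x‖ ∧ ‖x‖ < s}
  set e := (MeasurableEquiv.toLp 2 (Fin 2 → ℝ)).symm.trans MeasurableEquiv.finTwoArrow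
  have he : MeasurePreserving e.symm :=
    ((volume_preserving_finTwoArrow ℝ).comp
      (EuclideanSpace.volume_preserving_symm_measurableEquiv_toLp (Fin 2))).symm
  have hP : ∀ p, e.symm (polarCoord.symm p) = polarPt p.1 p.2 := fun p => by
    ext i
    fin_cases i <;> rfl
  have hA : MeasurableSet A :=
    ((isOpen_lt continuous_const continuous_norm).inter
      (isOpen_lt continuous_norm continuous_const)).measurableSet
  have hind : EqOn (fun p : ℝ × ℝ => p.1 • A.indicator g (e.symm (polarCoord.symm p)))
      ((Ioo r s ×ˢ univ).indicator fun p => p.1 • g (polarPt p.1 p.2)) polarCoord.target := by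
    rintro p ⟨hp : 0 < p.1, -⟩
    have hA : polarPt p.1 p.2 ∈ A ↔ p ∈ Ioo r s ×ˢ univ := by
      simp [A, norm_polarPt, abs_of_pos hp]
    simp only [hP]
    by_cases h : p ∈ Ioo r s ×ˢ univ
    · simp only [indicator_of_mem h, indicator_of_mem (hA.2 h)]
    · simp only [indicator_of_notMem h, indicator_of_notMem (mt hA.1 h), smul_zero]
  have htarget : polarCoord.target ∩ Ioo r s ×ˢ univ = Ioo r s ×ˢ Ioo (-π) π := by
    ext ⟨ρ, θ⟩
    simp only [polarCoord_target, mem_inter_iff, mem_prod, mem_Ioi, mem_Ioo, mem_univ, and_true]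
    exact ⟨fun h => ⟨h.2, h.1.2⟩, fun h => ⟨⟨hr.trans_lt h.1.1, h.2⟩, h.1⟩⟩
  rw [← integral_indicator hA, ← he.integral_comp', ← integral_comp_polarCoord_symm,
    setIntegral_congr_fun polarCoord.open_target.measurableSet hind,
    setIntegral_indicator (measurableSet_Ioo.prod MeasurableSet.univ), htarget]

theorem setIntegral_Ioo_neg_pi_pi_comp_polarPt (g : EuclideanSpace ℝ (Fin 2) → F) (ρ : ℝ) :
    ∫ θ in Ioo (-π) π, g (polarPt ρ θ) = ∫ θ in 0..2 * π, g (polarPt ρ θ) := by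
  have hper : Function.Periodic (fun θ => g (polarPt ρ θ)) (2 * π) := fun θ => by
    simp only [polarPt_add_two_pi]
  rw [← integral_Ioc_eq_integral_Ioo, ← intervalIntegral.integral_of_le (by linarith [pi_pos]),
    ← zero_add (2 * π), ← hper.intervalIntegral_add_eq (-π) 0]
  ring_nf

theorem integrableOn_and_setIntegral_annulus [CompleteSpace F] {r s : ℝ} (hr : 0 ≤ r)
    {g : EuclideanSpace ℝ (Fin 2) → F}
    (hg : ContinuousOn g {x : EuclideanSpace ℝ (Fin 2) | r ≤ ‖x‖ ∧ ‖x‖ ≤ s}) :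
    IntegrableOn (fun ρ => ρ • ∫ θ in 0..2 * π, g (polarPt ρ θ)) (Ioo r s) ∧
      ∫ x in {x : EuclideanSpace ℝ (Fin 2) | r < ‖x‖ ∧ ‖x‖ < s}, g x
        = ∫ ρ in Ioo r s, ρ • ∫ θ in 0..2 * π, g (polarPt ρ θ) := by
  have hcont : ContinuousOn (fun p : ℝ × ℝ => p.1 • g (polarPt p.1 p.2))
      (Icc r s ×ˢ Icc (-π) π) := by
    refine continuous_fst.continuousOn.smul (hg.comp (by fun_prop) fun p hp => ?_)
    simp [norm_polarPt, abs_of_nonneg (hr.trans hp.1.1), hp.1.1, hp.1.2]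
  have hint : IntegrableOn (fun p : ℝ × ℝ => p.1 • g (polarPt p.1 p.2))
      (Ioo r s ×ˢ Ioo (-π) π) :=
    (hcont.integrableOn_compact (isCompact_Icc.prod isCompact_Icc)).mono_set
      (prod_mono Ioo_subset_Icc_self Ioo_subset_Icc_self)
  have hinner : ∀ ρ, ∫ θ in Ioo (-π) π, ρ • g (polarPt ρ θ)
      = ρ • ∫ θ in 0..2 * π, g (polarPt ρ θ) := fun ρ => by
    rw [integral_smul, setIntegral_Ioo_neg_pi_pi_comp_polarPt]
  rw [setIntegral_annulus_eq_polar hr, Measure.volume_eq_prod, setIntegral_prod _ hint]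
  rw [Measure.volume_eq_prod, IntegrableOn, ← Measure.prod_restrict] at hint
  exact ⟨by simpa only [IntegrableOn, hinner] using hint.integral_prod_left, by simp only [hinner]⟩

theorem stmt_7 (r s : ℝ) (hr : 0 < r) (hrs : r < s)
    (f : EuclideanSpace ℝ (Fin 2) → ℝ)
    (U : Set (EuclideanSpace ℝ (Fin 2))) (hU : IsOpen U)
    (hsub : {x : EuclideanSpace ℝ (Fin 2) | r ≤ ‖x‖ ∧ ‖x‖ ≤ s} ⊆ U)
    (hf : ContDiffOn ℝ 1 f U)
    (fstar : ℝ → ℝ)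
    (hfstar : ∀ ρ ∈ Set.Icc r s,
      fstar ρ = (1 / (2 * π)) * ∫ θ in (0 : ℝ)..(2 * π),
        f ((WithLp.equiv 2 (Fin 2 → ℝ)).symm ![ρ * Real.cos θ, ρ * Real.sin θ])) :
    (∀ ρ ∈ Set.Ioo r s, DifferentiableAt ℝ fstar ρ) ∧
    2 * π * (∫ ρ in r..s, |deriv fstar ρ| ^ 2 * ρ)
      ≤ ∫ x in {x : EuclideanSpace ℝ (Fin 2) | r < ‖x‖ ∧ ‖x‖ < s},
          ‖gradient f x‖ ^ 2 := by
  have hPU : ∀ ρ ∈ Icc r s, ∀ θ, polarPt ρ θ ∈ U := fun ρ hρ θ => hsub <| by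
    simpa [norm_polarPt, abs_of_pos (hr.trans_le hρ.1)] using hρ
  have hf' : ContinuousOn (fderiv ℝ f) U := hf.continuousOn_fderiv_of_isOpen hU le_rfl
  have hderiv (ρ : ℝ) (hρ : ρ ∈ Ioo r s) : HasDerivAt fstar
      ((2 * π)⁻¹ * ∫ θ in 0..2 * π, fderiv ℝ f (polarPt ρ θ) (polarPt 1 θ)) ρ := by
    refine (hasDerivAt_circleMean hU hf hPU hρ).congr_of_eventuallyEq ?_
    filter_upwards [Ioo_mem_nhds hρ.1 hρ.2] with ρ' hρ'
    rw [hfstar ρ' (Ioo_subset_Icc_self hρ'), one_div]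
    rfl
  refine ⟨fun ρ hρ => (hderiv ρ hρ).differentiableAt, ?_⟩
  have hpt (ρ : ℝ) (hρ : ρ ∈ Ioo r s) : 2 * π * (|deriv fstar ρ| ^ 2 * ρ)
      ≤ ρ * ∫ θ in 0..2 * π, ‖fderiv ℝ f (polarPt ρ θ)‖ ^ 2 := by
    rw [(hderiv ρ hρ).deriv, sq_abs, mul_comm _ ρ, mul_left_comm]
    exact mul_le_mul_of_nonneg_left (two_pi_mul_sq_mean_apply_polarPt_le <|
      hf'.comp_continuous (by fun_prop) (hPU ρ (Ioo_subset_Icc_self hρ))) (by linarith [hρ.1])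
  have hgrad (x : EuclideanSpace ℝ (Fin 2)) : ‖gradient f x‖ = ‖fderiv ℝ f x‖ :=
    (InnerProductSpace.toDual ℝ _).symm.norm_map _
  obtain ⟨hint, hpolar⟩ := integrableOn_and_setIntegral_annulus hr.le
    (g := fun x => ‖fderiv ℝ f x‖ ^ 2) ((hf'.norm.pow 2).mono hsub)
  simp only [hgrad, smul_eq_mul] at hint hpolar ⊢
  rw [hpolar, intervalIntegral.integral_of_le hrs.le, integral_Ioc_eq_integral_Ioo,
    ← integral_const_mul]
  -- The left integrand is nonnegative, so only the right one has to be integrable.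
  refine integral_mono_of_nonneg (ae_restrict_of_forall_mem measurableSet_Ioo fun ρ hρ => ?_)
    hint (ae_restrict_of_forall_mem measurableSet_Ioo hpt)
  have := hr.trans hρ.1
  positivity
end

section
/- Let E be a real normed vector space, let t₀ < T be real numbers, θ ∈ (0, 1) and L ∈ ℝ. Let u : ℝ → E and F : ℝ → ℝ be differentiable on [t₀, T], with derivative u'(t) of u and F'(t) of F, and suppose that F(t) > L for every t ∈ [t₀, T] and that −F'(t) ≥ (F(t) − L)^θ · ‖u'(t)‖ for every t ∈ [t₀, T]. Then ∫_{t₀}^{T} ‖u'(t)‖ dt ≤ (1/(1 − θ)) · ( (F(t₀) − L)^{1−θ} − (F(T) − L)^{1−θ} ) ≤ (1/(1 − θ)) · (F(t₀) − L)^{1−θ}. -/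
/-!
Along the trajectory, `(F - L) ^ θ * ‖u'‖ ≤ -F'` says that `‖u'‖` is bounded by the derivative of the
increasing function `-(F - L) ^ (1 - θ) / (1 - θ)`, whose increment over `[t₀, T]` therefore bounds the
length of the curve.
-/

open Real MeasureTheory Set

theorem HasDerivAt.rpow_one_sub_div {f : ℝ → ℝ} {f' x θ : ℝ} (hf : HasDerivAt f f' x)
    (hx : 0 < f x) (hθ : θ ≠ 1) :
    HasDerivAt (fun t => f t ^ (1 - θ) / (1 - θ)) (f' * f x ^ (-θ)) x := by
  have h1θ : 1 - θ ≠ 0 := sub_ne_zero.mpr hθ.symm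
  have h := (hf.rpow_const (p := 1 - θ) (Or.inl hx.ne')).div_const (1 - θ)
  rwa [sub_sub_cancel_left, mul_comm f', mul_assoc, mul_div_cancel_left₀ _ h1θ] at h

theorem le_rpow_neg_mul_of_rpow_mul_le {x a b θ : ℝ} (hx : 0 < x) (h : x ^ θ * a ≤ b) :
    a ≤ x ^ (-θ) * b := by
  calc a = x ^ (-θ) * (x ^ θ * a) := by
        rw [← mul_assoc, ← rpow_add hx, neg_add_cancel, rpow_zero, one_mul]
    _ ≤ x ^ (-θ) * b := by gcongr

theorem integral_le_sub_rpow_one_sub_of_rpow_mul_le_neg_deriv {φ F F' : ℝ → ℝ} {a b θ : ℝ}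
    (hab : a ≤ b) (hθ : θ ≠ 1) (hF : ∀ t ∈ Icc a b, HasDerivAt F (F' t) t)
    (hpos : ∀ t ∈ Icc a b, 0 < F t) (hφ : ∀ t ∈ Ioo a b, F t ^ θ * φ t ≤ -F' t)
    (hint : IntegrableOn φ (Icc a b)) :
    ∫ t in a..b, φ t ≤ (F a ^ (1 - θ) - F b ^ (1 - θ)) / (1 - θ) := by
  have hg : ∀ t ∈ Icc a b, HasDerivAt (fun t => -(F t ^ (1 - θ) / (1 - θ)))
      (-(F' t * F t ^ (-θ))) t := fun t ht =>
    ((hF t ht).rpow_one_sub_div (hpos t ht) hθ).neg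
  have hφg : ∀ t ∈ Ioo a b, φ t ≤ -(F' t * F t ^ (-θ)) := fun t ht => by
    rw [← neg_mul, mul_comm]
    exact le_rpow_neg_mul_of_rpow_mul_le (hpos t (Ioo_subset_Icc_self ht)) (hφ t ht)
  calc ∫ t in a..b, φ t
      ≤ -(F b ^ (1 - θ) / (1 - θ)) - -(F a ^ (1 - θ) / (1 - θ)) :=
        intervalIntegral.integral_le_sub_of_hasDeriv_right_of_le hab
          (fun t ht => (hg t ht).continuousAt.continuousWithinAt)
          (fun t ht => (hg t (Ioo_subset_Icc_self ht)).hasDerivWithinAt) hint hφg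
    _ = (F a ^ (1 - θ) - F b ^ (1 - θ)) / (1 - θ) := by ring

theorem stmt_12_general {E : Type*} [NormedAddCommGroup E]
    (t₀ T θ L : ℝ) (ht : t₀ < T) (hθ : θ ∈ Set.Ioo (0 : ℝ) 1)
    (u' : ℝ → E) (F F' : ℝ → ℝ)
    (hF : ∀ t ∈ Set.Icc t₀ T, HasDerivAt F (F' t) t)
    (hFL : ∀ t ∈ Set.Icc t₀ T, L < F t)
    (hineq : ∀ t ∈ Set.Icc t₀ T, (F t - L) ^ θ * ‖u' t‖ ≤ -F' t)
    (hint : IntervalIntegrable (fun t => ‖u' t‖) volume t₀ T) :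
    (∫ t in t₀..T, ‖u' t‖)
        ≤ (1 / (1 - θ)) * ((F t₀ - L) ^ (1 - θ) - (F T - L) ^ (1 - θ)) ∧
    (1 / (1 - θ)) * ((F t₀ - L) ^ (1 - θ) - (F T - L) ^ (1 - θ))
        ≤ (1 / (1 - θ)) * (F t₀ - L) ^ (1 - θ) := by
  have h1θ : 0 < 1 - θ := sub_pos.mpr hθ.2
  refine ⟨?_, ?_⟩
  · rw [one_div_mul_eq_div]
    exact integral_le_sub_rpow_one_sub_of_rpow_mul_le_neg_deriv ht.le hθ.2.ne
      (fun t ht => (hF t ht).sub_const L) (fun t ht => sub_pos.mpr (hFL t ht))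
      (fun t ht => hineq t (Ioo_subset_Icc_self ht))
      ((intervalIntegrable_iff_integrableOn_Icc_of_le ht.le).mp hint)
  · have hT : 0 ≤ (F T - L) ^ (1 - θ) :=
      rpow_nonneg (sub_pos.mpr (hFL T (right_mem_Icc.mpr ht.le))).le _
    gcongr
    linarith

theorem stmt_12 {E : Type*} [NormedAddCommGroup E] [NormedSpace ℝ E]
    (t₀ T θ L : ℝ) (ht : t₀ < T) (hθ : θ ∈ Set.Ioo (0 : ℝ) 1)
    (u : ℝ → E) (u' : ℝ → E) (F F' : ℝ → ℝ)
    (hu : ∀ t ∈ Set.Icc t₀ T, HasDerivAt u (u' t) t)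
    (hF : ∀ t ∈ Set.Icc t₀ T, HasDerivAt F (F' t) t)
    (hFL : ∀ t ∈ Set.Icc t₀ T, L < F t)
    (hineq : ∀ t ∈ Set.Icc t₀ T, (F t - L) ^ θ * ‖u' t‖ ≤ -F' t)
    (hint : IntervalIntegrable (fun t => ‖u' t‖) volume t₀ T) :
    (∫ t in t₀..T, ‖u' t‖)
        ≤ (1 / (1 - θ)) * ((F t₀ - L) ^ (1 - θ) - (F T - L) ^ (1 - θ)) ∧
    (1 / (1 - θ)) * ((F t₀ - L) ^ (1 - θ) - (F T - L) ^ (1 - θ))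
        ≤ (1 / (1 - θ)) * (F t₀ - L) ^ (1 - θ) :=
  stmt_12_general t₀ T θ L ht hθ u' F F' hF hFL hineq hint
end

section
/- Let y : [0, ∞) → ℝ be differentiable with y(t) ≥ 0 for all t ≥ 0, and suppose there is a constant C ≥ 0 such that y'(t) ≤ C·y(t) for all t ≥ 0, and that ∫₀^∞ y(t) dt < ∞ (y is integrable on [0, ∞)). Then y(t) → 0 as t → ∞. -/
open Real MeasureTheory Filter

theorem stmt_13 (y : ℝ → ℝ) (C : ℝ) (hC : 0 ≤ C)
    (hdiff : ∀ t ≥ (0 : ℝ), DifferentiableAt ℝ y t)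
    (hpos : ∀ t ≥ (0 : ℝ), 0 ≤ y t)
    (hineq : ∀ t ≥ (0 : ℝ), deriv y t ≤ C * y t)
    (hint : IntegrableOn y (Set.Ici (0 : ℝ))) :
    Tendsto y atTop (nhds 0) := by
  -- the function z u = y u * exp (-C * u) is antitone on [0, ∞)
  set z : ℝ → ℝ := fun u => y u * Real.exp (-C * u) with hz_def
  have hanti : AntitoneOn z (Set.Ici (0 : ℝ)) := by
    apply antitoneOn_of_deriv_nonpos (convex_Ici 0)
    · intro x hx
      exact ((hdiff x hx).mul
        ((differentiableAt_id.const_mul (-C)).exp)).continuousAt.continuousWithinAt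
    · intro x hx
      rw [interior_Ici] at hx
      exact (((hdiff x hx.le).mul
        ((differentiableAt_id.const_mul (-C)).exp))).differentiableWithinAt
    · intro x hx
      rw [interior_Ici] at hx
      have h1 : HasDerivAt (fun u : ℝ => Real.exp (-C * u))
          (Real.exp (-C * x) * (-C)) x := by
        simpa using (((hasDerivAt_id x).const_mul (-C)).exp)
      have h2 : HasDerivAt z
          (deriv y x * Real.exp (-C * x) + y x * (Real.exp (-C * x) * (-C))) x :=
        ((hdiff x hx.le).hasDerivAt).mul h1
      rw [h2.deriv]
      have h3 := mul_nonneg (Real.exp_pos (-C * x)).le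
        (sub_nonneg.2 (hineq x hx.le))
      nlinarith [h3]
  -- Gronwall-type bound
  have gron : ∀ s t : ℝ, 0 ≤ s → s ≤ t → y t * Real.exp (-C * (t - s)) ≤ y s := by
    intro s t hs hst
    have key := hanti (Set.mem_Ici.2 hs) (Set.mem_Ici.2 (hs.trans hst)) hst
    have e1 : y t * Real.exp (-C * (t - s)) =
        (y t * Real.exp (-C * t)) * Real.exp (C * s) := by
      rw [mul_assoc, ← Real.exp_add]; ring_nf
    have e2 : (y s * Real.exp (-C * s)) * Real.exp (C * s) = y s := by
      rw [mul_assoc, ← Real.exp_add]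
      simp
    rw [e1, ← e2]
    exact mul_le_mul_of_nonneg_right key (Real.exp_pos _).le
  -- interval integrability
  have hii : ∀ a b : ℝ, 0 ≤ a → 0 ≤ b → IntervalIntegrable y volume a b := by
    intro a b ha hb
    apply (hint.mono_set ?_).intervalIntegrable
    rw [Set.uIcc, Set.Icc_subset_Ici_iff inf_le_sup]
    exact le_inf ha hb
  -- tail integral tends to 0
  have hI : IntegrableOn y (Set.Ioi (0 : ℝ)) :=
    hint.mono_set Set.Ioi_subset_Ici_self
  have hFt : Tendsto (fun r : ℝ => ∫ x in (0:ℝ)..r, y x) atTop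
      (nhds (∫ x in Set.Ioi (0:ℝ), y x)) :=
    intervalIntegral_tendsto_integral_Ioi 0 hI tendsto_id
  have hsub : Tendsto (fun r : ℝ => r - 1) atTop atTop := by
    simpa [sub_eq_add_neg] using tendsto_atTop_add_const_right atTop (-1 : ℝ) tendsto_id
  have hG : Tendsto (fun r : ℝ =>
      (∫ x in (0:ℝ)..r, y x) - ∫ x in (0:ℝ)..(r - 1), y x) atTop (nhds 0) := by
    have := hFt.sub (hFt.comp hsub)
    simpa using this
  -- now conclude
  by_contra hcon
  rw [Metric.tendsto_atTop] at hcon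
  push_neg at hcon
  obtain ⟨ε, hε, hεfreq⟩ := hcon
  set c : ℝ := ε * Real.exp (-C) with hc_def
  have hcpos : 0 < c := mul_pos hε (Real.exp_pos _)
  rw [Metric.tendsto_atTop] at hG
  obtain ⟨N, hN⟩ := hG c hcpos
  obtain ⟨t, ht, hyt⟩ := hεfreq (max N 1)
  have ht1 : (1 : ℝ) ≤ t := le_trans (le_max_right _ _) ht
  have htN : N ≤ t := le_trans (le_max_left _ _) ht
  have ht0 : (0 : ℝ) ≤ t := le_trans zero_le_one ht1
  have hytε : ε ≤ y t := by
    rwa [Real.dist_eq, sub_zero, abs_of_nonneg (hpos t ht0)] at hyt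
  -- lower bound the integral over [t-1, t]
  have hlow : c ≤ ∫ x in (t-1)..t, y x := by
    have hmono : ∫ x in (t-1)..t, (fun _ : ℝ => c) x ≤ ∫ x in (t-1)..t, y x := by
      apply intervalIntegral.integral_mono_on (by linarith) intervalIntegrable_const
        (hii (t-1) t (by linarith) ht0)
      intro s hs
      obtain ⟨hs1, hs2⟩ := hs
      have hs0 : (0 : ℝ) ≤ s := by linarith
      have hg := gron s t hs0 hs2
      have hexp : Real.exp (-C) ≤ Real.exp (-C * (t - s)) := by
        apply Real.exp_le_exp.2
        nlinarith
      calc c = ε * Real.exp (-C) := hc_def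
        _ ≤ y t * Real.exp (-C * (t - s)) :=
          mul_le_mul hytε hexp (Real.exp_pos _).le ((hpos t ht0).trans (le_refl _) |>.trans (le_refl _) |>.trans_eq rfl)
        _ ≤ y s := hg
    simpa using hmono.trans_eq' (by
      rw [intervalIntegral.integral_const]
      simp)
  have heq : (∫ x in (0:ℝ)..t, y x) - (∫ x in (0:ℝ)..(t-1), y x)
      = ∫ x in (t-1)..t, y x :=
    intervalIntegral.integral_interval_sub_left (hii 0 t le_rfl ht0)
      (hii 0 (t-1) le_rfl (by linarith))
  have := hN t htN
  rw [Real.dist_eq, sub_zero, heq] at this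
  have : |∫ x in (t-1)..t, y x| < c := this
  linarith [le_abs_self (∫ x in (t-1)..t, y x)]
end
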